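/- Let p, q, t ≥ 1 be integers, let G be a (theta, K_t)-free graph, and let (a,S,ℒ) be a (2^q·p + 2q, (2^q·p + 2q)²·t³ + q)-palanquin in G. Then there exist S1 ⊆ S with |S1| = p and ℒ1 ⊆ ℒ with |ℒ1| = q such that for every L ∈ ℒ1, no two vertices in S1 have a common neighbor in L, and either every x ∈ S1 is L-bad, or every x ∈ S1 is L-ugly. -/

import Mathlib

open SimpleGraph

universe u v

/-- `G` contains `H` as an induced subgraph: there is a graph embedding of `H` into `G`. -/
def ContainsInduced {V : Type u} {W : Type v} (G : SimpleGraph V) (H : SimpleGraph W) : Prop :=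
  Nonempty (H ↪g G)

/-- `G` has a hole (an induced cycle on at least four vertices) on `n` vertices. -/
def HasHole {V : Type u} (G : SimpleGraph V) (n : ℕ) : Prop :=
  4 ≤ n ∧ ContainsInduced G (cycleGraph n)

/-- `G` is chordal: it has no hole. -/
def Chordal {V : Type u} (G : SimpleGraph V) : Prop :=
  ∀ n : ℕ, ¬ HasHole G n

/-- `G` is even-hole-free: it has no hole on an even number of vertices. -/
def EvenHoleFree {V : Type u} (G : SimpleGraph V) : Prop :=
  ∀ n : ℕ, Even n → ¬ HasHole G n

/-- A tree decomposition of `G`: a tree `T` together with bags indexed by the nodes of `T`,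
covering all vertices and edges of `G`, such that for every vertex the set of nodes whose bag
contains it induces a connected (hence nonempty) subgraph of `T`. -/
structure TreeDecomp {V : Type u} (G : SimpleGraph V) where
  ι : Type u
  T : SimpleGraph ι
  isTree : T.IsTree
  bag : ι → Set V
  mem_bag : ∀ v : V, ∃ i, v ∈ bag i
  edge_bag : ∀ ⦃x y : V⦄, G.Adj x y → ∃ i, x ∈ bag i ∧ y ∈ bag i
  conn : ∀ v : V, (T.induce {i | v ∈ bag i}).Connected

/-- `G` has treewidth at most `w`. -/
def TreewidthLe {V : Type u} (G : SimpleGraph V) (w : ℕ) : Prop :=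
  ∃ D : TreeDecomp G, ∀ i, (D.bag i).ncard ≤ w + 1

/-- The cone over `F`: add one new vertex adjacent to all vertices of `F`. -/
def coneGraph {α : Type u} (F : SimpleGraph α) : SimpleGraph (Option α) where
  Adj x y :=
    match x, y with
    | some a, some b => F.Adj a b
    | some _, none => True
    | none, some _ => True
    | none, none => False
  symm := by
    constructor
    rintro (_ | a) (_ | b) h
    · exact h
    · trivial
    · trivial
    · exact F.adj_symm h
  loopless := by
    constructor
    rintro (_ | a) h
    · exact h
    · exact F.irrefl h

/-- The diamond: `K₄` minus an edge. -/
def diamondGraph : SimpleGraph (Fin 4) :=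
  (⊤ : SimpleGraph (Fin 4)).deleteEdges {s(0, 1)}
/-- An induced path in `G` from `x` to `y`, given as an embedding of a path graph whose first
vertex is `x` and whose last vertex is `y`. -/
structure IPath {V : Type u} (G : SimpleGraph V) (x y : V) where
  n : ℕ
  pos : 0 < n
  f : pathGraph n ↪g G
  hx : f ⟨0, pos⟩ = x
  hy : f ⟨n - 1, Nat.sub_lt pos Nat.one_pos⟩ = y

namespace IPath

variable {V : Type u} {G : SimpleGraph V} {x y : V}

/-- The vertex set of the path. -/
def support (P : IPath G x y) : Set V := Set.range P.f

/-- The interior of the path: its vertices other than the two ends. -/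
def interior (P : IPath G x y) : Set V :=
  {v | ∃ i : Fin P.n, 0 < (i : ℕ) ∧ (i : ℕ) < P.n - 1 ∧ P.f i = v}

/-- The length (number of edges) of the path. -/
def length (P : IPath G x y) : ℕ := P.n - 1

end IPath

/-- An induced path in `G` (with unspecified ends). -/
structure IndPath {V : Type u} (G : SimpleGraph V) where
  n : ℕ
  pos : 0 < n
  f : pathGraph n ↪g G

namespace IndPath

variable {V : Type u} {G : SimpleGraph V}

/-- The vertex set of the path. -/
def support (P : IndPath G) : Set V := Set.range P.f

/-- The first vertex of the path. -/
def first (P : IndPath G) : V := P.f ⟨0, P.pos⟩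

/-- The last vertex of the path. -/
def last (P : IndPath G) : V := P.f ⟨P.n - 1, Nat.sub_lt P.pos Nat.one_pos⟩

end IndPath

/-- The set of neighbors of `v` lying in the set `H` (i.e. the neighbors of `v` in the
subgraph of `G` induced by `H`, for `v` possibly outside `H`). -/
def NbrsIn {V : Type u} (G : SimpleGraph V) (H : Set V) (v : V) : Set V :=
  H ∩ G.neighborSet v

/-- `v` is `H`-good: it has exactly one neighbor in `H`. -/
def GoodFor {V : Type u} (G : SimpleGraph V) (H : Set V) (v : V) : Prop :=
  (NbrsIn G H v).ncard = 1

/-- `v` is `H`-bad: its set of neighbors in `H` is a clique with at least two vertices. -/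
def BadFor {V : Type u} (G : SimpleGraph V) (H : Set V) (v : V) : Prop :=
  G.IsClique (NbrsIn G H v) ∧ 2 ≤ (NbrsIn G H v).ncard

/-- `v` is `H`-ugly: its set of neighbors in `H` is not a clique. -/
def UglyFor {V : Type u} (G : SimpleGraph V) (H : Set V) (v : V) : Prop :=
  ¬ G.IsClique (NbrsIn G H v)

/-- `A` is anticomplete to `B`: there is no edge of `G` with one end in `A` and one in `B`. -/
def Anticomplete {V : Type u} (G : SimpleGraph V) (A B : Set V) : Prop :=
  ∀ a ∈ A, ∀ b ∈ B, ¬ G.Adj a b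

/-- The data of a theta with ends `a, b` and paths `P₁, P₂, P₃`: the ends are distinct and
non-adjacent, each path has length at least two, and the interiors of the paths are pairwise
disjoint and pairwise anticomplete. -/
def ThetaWitness {V : Type u} (G : SimpleGraph V) (a b : V)
    (P₁ P₂ P₃ : IPath G a b) : Prop :=
  a ≠ b ∧ ¬ G.Adj a b ∧
  2 ≤ P₁.length ∧ 2 ≤ P₂.length ∧ 2 ≤ P₃.length ∧
  Disjoint P₁.interior P₂.interior ∧ Disjoint P₁.interior P₃.interior ∧
  Disjoint P₂.interior P₃.interior ∧
  Anticomplete G P₁.interior P₂.interior ∧ Anticomplete G P₁.interior P₃.interior ∧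
  Anticomplete G P₂.interior P₃.interior

/-- There is a theta in `G`. -/
def HasTheta {V : Type u} (G : SimpleGraph V) : Prop :=
  ∃ (a b : V) (P₁ P₂ P₃ : IPath G a b), ThetaWitness G a b P₁ P₂ P₃

/-- The data of a prism with triangles `a₁a₂a₃`, `b₁b₂b₃` and paths `P₁, P₂, P₃`, where `Pᵢ`
has ends `aᵢ, bᵢ`, the paths are pairwise disjoint, and for `i ≠ j` the only edges between
`Pᵢ` and `Pⱼ` are `aᵢaⱼ` and `bᵢbⱼ`. -/
def PrismWitness {V : Type u} (G : SimpleGraph V) (a₁ a₂ a₃ b₁ b₂ b₃ : V)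
    (P₁ : IPath G a₁ b₁) (P₂ : IPath G a₂ b₂) (P₃ : IPath G a₃ b₃) : Prop :=
  G.Adj a₁ a₂ ∧ G.Adj a₁ a₃ ∧ G.Adj a₂ a₃ ∧
  G.Adj b₁ b₂ ∧ G.Adj b₁ b₃ ∧ G.Adj b₂ b₃ ∧
  Disjoint P₁.support P₂.support ∧ Disjoint P₁.support P₃.support ∧
  Disjoint P₂.support P₃.support ∧
  (∀ u ∈ P₁.support, ∀ v_ ∈ P₂.support, G.Adj u v_ → (u = a₁ ∧ v_ = a₂) ∨ (u = b₁ ∧ v_ = b₂)) ∧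
  (∀ u ∈ P₁.support, ∀ v_ ∈ P₃.support, G.Adj u v_ → (u = a₁ ∧ v_ = a₃) ∨ (u = b₁ ∧ v_ = b₃)) ∧
  (∀ u ∈ P₂.support, ∀ v_ ∈ P₃.support, G.Adj u v_ → (u = a₂ ∧ v_ = a₃) ∨ (u = b₂ ∧ v_ = b₃))

/-- There is a prism in `G`. -/
def HasPrism {V : Type u} (G : SimpleGraph V) : Prop :=
  ∃ (a₁ a₂ a₃ b₁ b₂ b₃ : V) (P₁ : IPath G a₁ b₁) (P₂ : IPath G a₂ b₂) (P₃ : IPath G a₃ b₃),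
    PrismWitness G a₁ a₂ a₃ b₁ b₂ b₃ P₁ P₂ P₃

/-- The data of a wheel: a hole (given by an embedding `f` of a cycle on `n ≥ 4` vertices)
together with a vertex `v` outside the hole having at least three neighbors in it. -/
def WheelWitness {V : Type u} (G : SimpleGraph V) (n : ℕ) (f : cycleGraph n ↪g G)
    (v : V) : Prop :=
  4 ≤ n ∧ v ∉ Set.range f ∧ 3 ≤ (NbrsIn G (Set.range f) v).ncard

/-- There is an even wheel in `G`: a wheel whose center has an even number of neighbors
in the hole. -/
def HasEvenWheel {V : Type u} (G : SimpleGraph V) : Prop :=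
  ∃ (n : ℕ) (f : cycleGraph n ↪g G) (v : V),
    WheelWitness G n f v ∧ Even ((NbrsIn G (Set.range f) v).ncard)

/-- `G` belongs to the class `𝓔` of (C₄, theta, prism, even wheel)-free graphs. -/
def MemE {V : Type u} (G : SimpleGraph V) : Prop :=
  ¬ ContainsInduced G (cycleGraph 4) ∧ ¬ HasTheta G ∧ ¬ HasPrism G ∧ ¬ HasEvenWheel G
/-- The whole graph `G` is a theta. -/
def IsThetaGraph {V : Type u} (G : SimpleGraph V) : Prop :=
  ∃ (a b : V) (P₁ P₂ P₃ : IPath G a b), ThetaWitness G a b P₁ P₂ P₃ ∧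
    ∀ u : V, u ∈ P₁.support ∪ P₂.support ∪ P₃.support

/-- The whole graph `G` is a prism. -/
def IsPrismGraph {V : Type u} (G : SimpleGraph V) : Prop :=
  ∃ (a₁ a₂ a₃ b₁ b₂ b₃ : V) (P₁ : IPath G a₁ b₁) (P₂ : IPath G a₂ b₂) (P₃ : IPath G a₃ b₃),
    PrismWitness G a₁ a₂ a₃ b₁ b₂ b₃ P₁ P₂ P₃ ∧
    ∀ u : V, u ∈ P₁.support ∪ P₂.support ∪ P₃.support

/-- The whole graph `G` is (the graph of) an even wheel. -/
def IsEvenWheelGraph {V : Type u} (G : SimpleGraph V) : Prop :=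
  ∃ (n : ℕ) (f : cycleGraph n ↪g G) (v : V),
    WheelWitness G n f v ∧ Even ((NbrsIn G (Set.range f) v).ncard) ∧
    ∀ u : V, u ∈ insert v (Set.range f)

/-- The graph `G△^{z₁}_{z₂}`: delete `z₁` and `z₂` and add a new vertex (represented by
`none`) whose neighborhood is exactly `N_G(z₁) ∩ N_G(z₂)`. -/
def triMinor {V : Type u} (G : SimpleGraph V) (z₁ z₂ : V) :
    SimpleGraph (Option {v : V // v ≠ z₁ ∧ v ≠ z₂}) where
  Adj x y :=
    match x, y with
    | some a, some b => G.Adj a b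
    | some a, none => G.Adj z₁ a ∧ G.Adj z₂ a
    | none, some b => G.Adj z₁ b ∧ G.Adj z₂ b
    | none, none => False
  symm := by
    constructor
    rintro (_ | a) (_ | b) h
    · exact h
    · exact h
    · exact h
    · exact G.adj_symm h
  loopless := by
    constructor
    rintro (_ | a) h
    · exact h
    · exact G.irrefl h

/-- `v` is a `d`-substantial vertex of `G`: there is a hole `C` of `G ∖ {v}` in which `v`
has at least `d + 1` neighbors and such that `C ∖ N_C(v)` is disconnected. -/
def Substantial {V : Type u} (G : SimpleGraph V) (d : ℕ) (v : V) : Prop :=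
  ∃ (n : ℕ) (f : cycleGraph n ↪g G), 4 ≤ n ∧ v ∉ Set.range f ∧
    d + 1 ≤ (NbrsIn G (Set.range f) v).ncard ∧
    ¬ (G.induce (Set.range f \ G.neighborSet v)).Connected

/-- A `w`-kaleidoscope `(a, x, y, 𝒲)` in `G`: `x–a–y` is an induced path, `𝒲` is a family of
`w` pairwise internally disjoint induced paths from `x` to `y` avoiding `a`, and `a` is
anticomplete to the interior of every path of the family. -/
structure Kaleidoscope {V : Type u} (G : SimpleGraph V) (w : ℕ) where
  a : V
  x : V
  y : V
  hxy : x ≠ y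
  hnadj : ¬ G.Adj x y
  hax : G.Adj a x
  hay : G.Adj a y
  W : Fin w → IPath G x y
  notA : ∀ i, a ∉ (W i).support
  intDisj : ∀ i j, i ≠ j → Disjoint (W i).interior (W j).interior
  aAnti : ∀ i, ∀ u ∈ (W i).interior, ¬ G.Adj a u

/-- Restriction of a kaleidoscope to the subfamily of paths indexed by an injection `g`. -/
def Kaleidoscope.restrict {V : Type u} {G : SimpleGraph V} {k w : ℕ}
    (K : Kaleidoscope G k) (g : Fin w → Fin k) (hg : Function.Injective g) :
    Kaleidoscope G w where
  a := K.a
  x := K.x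
  y := K.y
  hxy := K.hxy
  hnadj := K.hnadj
  hax := K.hax
  hay := K.hay
  W := fun i => K.W (g i)
  notA := fun i => K.notA (g i)
  intDisj := fun i j hij => K.intDisj (g i) (g j) (fun e => hij (hg e))
  aAnti := fun i => K.aAnti (g i)

/-- The set `Z` is `d`-mirrored by the kaleidoscope `K = (a, x, y, 𝒲)`: `Z` avoids `a` and
all paths of `𝒲`; `a` has at most one neighbor in `Z`; and every `z ∈ Z` is anticomplete to
`N_W[x] ∪ N_W[y]` and has at least `d` neighbors in `W`, for every `W ∈ 𝒲`. -/
def Mirrored {V : Type u} (G : SimpleGraph V) {w : ℕ} (K : Kaleidoscope G w) (d : ℕ)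
    (Z : Set V) : Prop :=
  K.a ∉ Z ∧
  (∀ i, ∀ z ∈ Z, z ∉ (K.W i).support) ∧
  (Z ∩ G.neighborSet K.a).ncard ≤ 1 ∧
  ∀ z ∈ Z, ∀ i,
    (∀ u ∈ insert K.x (NbrsIn G (K.W i).support K.x) ∪
        insert K.y (NbrsIn G (K.W i).support K.y), ¬ G.Adj z u) ∧
    d ≤ (NbrsIn G (K.W i).support z).ncard
/-- An `(s, l)`-palanquin `(a, S, ℒ)` in `G`: `S` is a stable set of `s` neighbors of `a`,
and `ℒ` is a family of `l` pairwise disjoint induced paths, all avoiding `S ∪ {a}`, such that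
`a` is anticomplete to every path of `ℒ` and every vertex of `S` has a neighbor in every
path of `ℒ`. -/
structure Palanquin {V : Type u} (G : SimpleGraph V) (s l : ℕ) where
  a : V
  S : Set V
  L : Fin l → IndPath G
  sub : S ⊆ G.neighborSet a
  stable : ∀ u ∈ S, ∀ w ∈ S, ¬ G.Adj u w
  card : S.ncard = s
  disj : ∀ i j, i ≠ j → Disjoint (L i).support (L j).support
  avoid : ∀ i, Disjoint (L i).support (insert a S)
  anti : ∀ i, ∀ u ∈ (L i).support, ¬ G.Adj a u
  nbr : ∀ x ∈ S, ∀ i, ∃ u ∈ (L i).support, G.Adj x u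

/-- The ordering condition of an alignment: for `i < j`, all neighbors of `π i` on the path
appear strictly before all neighbors of `π j`, positions being counted from the first vertex
of `P` if `rev = false`, and from the last vertex if `rev = true`. -/
def AlignOrder {V : Type u} (G : SimpleGraph V) {s : ℕ} (P : IndPath G)
    (π : Fin s → V) (rev : Bool) : Prop :=
  ∀ i j : Fin s, i < j → ∀ ii jj : Fin P.n,
    G.Adj (π i) (P.f ii) → G.Adj (π j) (P.f jj) →
    (if rev then (jj : ℕ) < (ii : ℕ) else (ii : ℕ) < (jj : ℕ))

/-- `(S, P, x, π)` is an `s`-alignment in `G`: `S` is a stable set of size `s` enumerated by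
the bijection `π`, the induced path `P` avoids `S`, has `x` as an end, every vertex of `S`
has a neighbor in `P`, and traversing `P` starting at `x`, for `i < j` all neighbors of
`π i` appear strictly before all neighbors of `π j`. -/
def IsAlignment {V : Type u} (G : SimpleGraph V) (s : ℕ) (S : Set V) (P : IndPath G)
    (x : V) (π : Fin s → V) : Prop :=
  (∀ u ∈ S, ∀ w ∈ S, ¬ G.Adj u w) ∧ S.ncard = s ∧
  Function.Injective π ∧ Set.range π = S ∧
  Disjoint S P.support ∧
  (∀ u ∈ S, ∃ w ∈ P.support, G.Adj u w) ∧
  ((x = P.first ∧ AlignOrder G P π false) ∨ (x = P.last ∧ AlignOrder G P π true))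

/-- `N` is a `k`-tree: either a complete graph on `k` vertices, or a graph on `h > k`
vertices admitting a bijection onto `{0, …, h-1}` such that every vertex among the first
`h - k` has its set of forward neighbors a clique of exactly `k` vertices. -/
def IsKTree {α : Type u} [Fintype α] (k : ℕ) (N : SimpleGraph α) : Prop :=
  (Fintype.card α = k ∧ N = ⊤) ∨
  (k < Fintype.card α ∧ ∃ e : α ≃ Fin (Fintype.card α),
    ∀ w : α, (e w : ℕ) < Fintype.card α - k →
      N.IsClique {u | N.Adj w u ∧ e w < e u} ∧ {u | N.Adj w u ∧ e w < e u}.ncard = k)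

/-- `N`, a graph on `Fin m`, is a `k`-tree whose defining ordering is the natural order of
`Fin m`. -/
def IsOrderedKTree (k m : ℕ) (N : SimpleGraph (Fin m)) : Prop :=
  (m = k ∧ N = ⊤) ∨
  (k < m ∧ ∀ i : Fin m, (i : ℕ) < m - k →
    N.IsClique {j | N.Adj i j ∧ i < j} ∧ {j | N.Adj i j ∧ i < j}.ncard = k)

/-- The set `S` is (the vertex set of) a blurry copy of the ordered `2`-tree `N` in `G`:
there is an enumeration `e` of `S` such that the copy `Y` of `N` transported along `e` is a
spanning subgraph of `G[S]`, and whenever `i < j` and `e i, e j` are adjacent in `G` but not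
in `Y`, the vertex `e j` is adjacent in `G` to both forward neighbors of `e i` in `Y`. -/
def BlurryCopy {V : Type u} {m : ℕ} (G : SimpleGraph V) (N : SimpleGraph (Fin m))
    (S : Set V) : Prop :=
  ∃ e : Fin m → V, Function.Injective e ∧ Set.range e = S ∧
    (∀ i j : Fin m, N.Adj i j → G.Adj (e i) (e j)) ∧
    (∀ i j : Fin m, i < j → G.Adj (e i) (e j) → ¬ N.Adj i j →
      ∀ k : Fin m, N.Adj i k → i < k → G.Adj (e j) (e k))

/-!
Let `(a, S, ℒ)` be the palanquin. If two distinct `x, y ∈ S` had non-adjacent common neighbours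
`u, w` on two different paths of `ℒ`, the paths `x-a-y`, `x-u-y`, `x-w-y` would form a theta;
so such common neighbours form a clique, and `x, y` have a common neighbour on fewer than `t`
paths. Hence all but at most `|S|²·t` paths of `ℒ` are clean: no two vertices of `S` have a
common neighbour on them, and we keep `q` of them.

On a clean path `L` at most two vertices of `S` are `L`-good: if `x, y, z` had their unique
neighbours on `L` in this order, then `a-y-L`, `a-x-L` and `a-z-L` would form a theta whose ends
are `a` and the neighbour of `y`. Discarding the at most `2q` vertices that are good on one of
the `q` chosen paths leaves `2^q·p` vertices, each bad or ugly on every chosen path, and halving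
`q` times according to badness leaves `p` vertices of the same type on each path.
-/

lemma Finset.exists_lt_lt_of_two_lt_card {α : Type*} [LinearOrder α] {s : Finset α}
    (hs : 2 < s.card) : ∃ a ∈ s, ∃ b ∈ s, ∃ c ∈ s, a < b ∧ b < c := by
  have hne : s.Nonempty := Finset.card_pos.mp (by omega)
  obtain ⟨b, hb⟩ : ((s.erase (s.min' hne)).erase (s.max' hne)).Nonempty := by
    rw [← Finset.card_pos]
    have h₁ := Finset.pred_card_le_card_erase (s := s) (a := s.min' hne)
    have h₂ := Finset.pred_card_le_card_erase (s := s.erase (s.min' hne)) (a := s.max' hne)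
    omega
  simp only [Finset.mem_erase] at hb
  obtain ⟨hbmax, hbmin, hb⟩ := hb
  exact ⟨_, s.min'_mem hne, b, hb, _, s.max'_mem hne,
    lt_of_le_of_ne (s.min'_le b hb) (Ne.symm hbmin), lt_of_le_of_ne (s.le_max' b hb) hbmax⟩

lemma Finset.exists_subset_card_eq_forall_or_forall_not {α ι : Type*} (Q : ι → α → Prop)
    (p : ℕ) (J : Finset ι) (S : Finset α) (hS : 2 ^ J.card * p ≤ S.card) :
    ∃ S₁ ⊆ S, S₁.card = p ∧ ∀ i ∈ J, (∀ x ∈ S₁, Q i x) ∨ ∀ x ∈ S₁, ¬ Q i x := by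
  classical
  induction J using Finset.induction_on generalizing S with
  | empty =>
    obtain ⟨S₁, hS₁, hcard⟩ := Finset.exists_subset_card_eq (by simpa using hS)
    exact ⟨S₁, hS₁, hcard, by simp⟩
  | insert i J hi ih =>
    rw [Finset.card_insert_of_notMem hi, pow_succ, mul_right_comm] at hS
    have hsplit := Finset.card_filter_add_card_filter_not (s := S) (Q i)
    obtain ⟨S', hS'S, hS', hQ⟩ : ∃ S' ⊆ S, 2 ^ J.card * p ≤ S'.card ∧
        ((∀ x ∈ S', Q i x) ∨ ∀ x ∈ S', ¬ Q i x) := by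
      by_cases h : 2 ^ J.card * p ≤ (S.filter (Q i)).card
      · exact ⟨_, Finset.filter_subset _ _, h, Or.inl fun x hx => (Finset.mem_filter.mp hx).2⟩
      · exact ⟨_, Finset.filter_subset _ _, by omega,
          Or.inr fun x hx => (Finset.mem_filter.mp hx).2⟩
    obtain ⟨S₁, hS₁, hcard, hJ⟩ := ih S' hS'
    refine ⟨S₁, hS₁.trans hS'S, hcard, (Finset.forall_mem_insert _ _ _).mpr ⟨?_, hJ⟩⟩
    exact hQ.imp (fun h x hx => h x (hS₁ hx)) (fun h x hx => h x (hS₁ hx))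

namespace SimpleGraph.pathGraph

def shift {m n : ℕ} (s : ℕ) (h : s + m ≤ n) : pathGraph m ↪g pathGraph n where
  toFun k := ⟨s + k, by omega⟩
  inj' i j hij := Fin.ext (by simpa using congrArg Fin.val hij)
  map_rel_iff' {i j} := by
    change (pathGraph n).Adj ⟨s + i, _⟩ ⟨s + j, _⟩ ↔ _
    simp only [pathGraph_adj]; omega

def rev (n : ℕ) : pathGraph n ↪g pathGraph n where
  toFun := Fin.rev
  inj' := Fin.rev_injective
  map_rel_iff' {i j} := by
    change (pathGraph n).Adj i.rev j.rev ↔ _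
    simp only [pathGraph_adj, Fin.val_rev]; omega

end SimpleGraph.pathGraph

namespace IPath

variable {V : Type*} {G : SimpleGraph V} {x y : V}

def single (v : V) : IPath G v v where
  n := 1
  pos := Nat.one_pos
  f :=
    { toFun := fun _ => v
      inj' := fun i j _ => Subsingleton.elim i j
      map_rel_iff' := by simp [pathGraph_adj] }
  hx := rfl
  hy := rfl

def reverse (P : IPath G x y) : IPath G y x where
  n := P.n
  pos := P.pos
  f := P.f.comp (pathGraph.rev P.n)
  hx := by
    change P.f (Fin.rev _) = y
    exact (congrArg P.f (Fin.ext (by simp))).trans P.hy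
  hy := by
    change P.f (Fin.rev _) = x
    exact (congrArg P.f (Fin.ext (by simp; omega))).trans P.hx

lemma first_eq_iff (P : IPath G x y) (j : Fin P.n) : P.f j = x ↔ (j : ℕ) = 0 := by
  calc P.f j = x ↔ P.f j = P.f ⟨0, P.pos⟩ := by rw [P.hx]
    _ ↔ (j : ℕ) = 0 := by rw [P.f.injective.eq_iff, Fin.ext_iff]

lemma last_eq_iff (P : IPath G x y) (j : Fin P.n) : P.f j = y ↔ (j : ℕ) = P.n - 1 := by
  calc P.f j = y ↔ P.f j = P.f ⟨P.n - 1, _⟩ := by rw [P.hy]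
    _ ↔ (j : ℕ) = P.n - 1 := by rw [P.f.injective.eq_iff, Fin.ext_iff]

def cons (a : V) (P : IPath G x y) (ha : a ∉ P.support)
    (hadj : ∀ v ∈ P.support, G.Adj a v ↔ v = x) : IPath G a y where
  n := P.n + 1
  pos := Nat.succ_pos _
  f :=
    { toFun := Fin.cons (α := fun _ => V) a P.f
      inj' := Fin.cons_injective_iff.mpr ⟨ha, P.f.injective⟩
      map_rel_iff' := by
        intro i j
        cases i using Fin.cases <;> cases j using Fin.cases <;>
          simp [pathGraph_adj, G.adj_comm _ a, hadj _ (Set.mem_range_self _), first_eq_iff] }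
  hx := rfl
  hy := by
    have hn := P.pos
    change Fin.cons (α := fun _ => V) a P.f ⟨P.n + 1 - 1, by omega⟩ = y
    rw [show (⟨P.n + 1 - 1, _⟩ : Fin (P.n + 1)) = Fin.succ ⟨P.n - 1, by omega⟩ from
      Fin.ext (by simp; omega), Fin.cons_succ]
    exact P.hy

lemma support_single (v : V) : (single v : IPath G v v).support = {v} :=
  Set.ext fun _ => ⟨fun ⟨_, h⟩ => h.symm, fun h => ⟨⟨0, Nat.one_pos⟩, h.symm⟩⟩

lemma support_reverse (P : IPath G x y) : P.reverse.support = P.support :=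
  Fin.rev_surjective.range_comp P.f

lemma support_cons (a : V) (P : IPath G x y) (ha : a ∉ P.support)
    (hadj : ∀ v ∈ P.support, G.Adj a v ↔ v = x) :
    (cons a P ha hadj).support = insert a P.support :=
  Fin.range_cons a P.f

lemma length_cons (a : V) (P : IPath G x y) (ha : a ∉ P.support)
    (hadj : ∀ v ∈ P.support, G.Adj a v ↔ v = x) :
    (cons a P ha hadj).length = P.n :=
  Nat.add_sub_cancel _ _

lemma interior_subset (P : IPath G x y) : P.interior ⊆ P.support \ {x, y} := by
  rintro _ ⟨i, hi₀, hi₁, rfl⟩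
  refine ⟨Set.mem_range_self i, ?_⟩
  rintro (h | h)
  · have := (P.first_eq_iff i).mp h
    omega
  · have := (P.last_eq_iff i).mp h
    omega

lemma interior_cons_subset (a : V) (P : IPath G x y) (ha : a ∉ P.support)
    (hadj : ∀ v ∈ P.support, G.Adj a v ↔ v = x) :
    (cons a P ha hadj).interior ⊆ P.support \ {y} := by
  intro v hv
  obtain ⟨hv, hvay⟩ := interior_subset _ hv
  rw [support_cons] at hv
  rcases hv with rfl | hv
  · exact absurd (Or.inl rfl) hvay
  · exact ⟨hv, fun h => hvay (Or.inr h)⟩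

end IPath

namespace IndPath

variable {V : Type*} {G : SimpleGraph V}

def segment (P : IndPath G) (s e : Fin P.n) (hse : s ≤ e) : IPath G (P.f s) (P.f e) where
  n := e - s + 1
  pos := Nat.succ_pos _
  f := P.f.comp (pathGraph.shift s (by omega))
  hx := by
    change P.f ⟨s + 0, _⟩ = _
    simp
  hy := by
    change P.f ⟨s + (e - s + 1 - 1), _⟩ = _
    congr 1; ext; simp; omega

lemma support_segment (P : IndPath G) (s e : Fin P.n) (hse : s ≤ e) :
    (P.segment s e hse).support = P.f '' Set.Icc s e := by
  ext v
  constructor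
  · rintro ⟨k, rfl⟩
    have hk : (k : ℕ) < e - s + 1 := k.isLt
    exact ⟨⟨s + k, by omega⟩, by simp only [Set.mem_Icc, Fin.le_def]; omega, rfl⟩
  · rintro ⟨j, hj, rfl⟩
    simp only [Set.mem_Icc, Fin.le_def] at hj
    exact ⟨⟨j - s, show (j : ℕ) - s < e - s + 1 by omega⟩,
      congrArg P.f (Fin.ext (show s + ((j : ℕ) - s) = j by omega))⟩

lemma support_segment_sdiff_right (P : IndPath G) (s e : Fin P.n) (hse : s ≤ e) :
    (P.segment s e hse).support \ {P.f e} = P.f '' Set.Ico s e := by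
  rw [support_segment, ← Set.image_singleton, ← Set.image_sdiff P.f.injective,
    Set.Icc_sdiff_right]

lemma support_segment_sdiff_left (P : IndPath G) (s e : Fin P.n) (hse : s ≤ e) :
    (P.segment s e hse).support \ {P.f s} = P.f '' Set.Ioc s e := by
  rw [support_segment, ← Set.image_singleton, ← Set.image_sdiff P.f.injective,
    Set.Icc_sdiff_left]

end IndPath

section

variable {V : Type*} {G : SimpleGraph V}

lemma Anticomplete.mono {A B A' B' : Set V} (h : Anticomplete G A B) (hA : A' ⊆ A)
    (hB : B' ⊆ B) : Anticomplete G A' B' :=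
  fun u hu w hw => h u (hA hu) w (hB hw)

lemma IPath.exists_cons_cons {x y : V} (a m : V) (Q : IPath G x y) (ham : G.Adj a m)
    (ha : a ∉ Q.support) (hm : m ∉ Q.support) (hanti : ∀ v ∈ Q.support, ¬ G.Adj a v)
    (hmadj : ∀ v ∈ Q.support, G.Adj m v ↔ v = x) :
    ∃ R : IPath G a y, 2 ≤ R.length ∧ R.interior ⊆ insert m (Q.support \ {y}) := by
  have ha' : a ∉ (Q.cons m hm hmadj).support := by
    rw [IPath.support_cons]
    rintro (h | h)
    exacts [ham.ne h, ha h]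
  have hadj' : ∀ v ∈ (Q.cons m hm hmadj).support, G.Adj a v ↔ v = m := by
    rw [IPath.support_cons]
    rintro v (rfl | hv)
    · simpa using ham
    · exact iff_of_false (hanti v hv) (ne_of_mem_of_not_mem hv hm)
  refine ⟨(Q.cons m hm hmadj).cons a ha' hadj', ?_, ?_⟩
  · rw [IPath.length_cons]
    exact Nat.succ_le_succ Q.pos
  · refine (IPath.interior_cons_subset _ _ _ _).trans ?_
    rw [IPath.support_cons]
    exact Set.insert_sdiff_subset

lemma hasTheta_of_interior_subset {a b : V} (P₁ P₂ P₃ : IPath G a b) {X₁ X₂ X₃ : Set V}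
    (hab : a ≠ b) (hnab : ¬ G.Adj a b)
    (hl₁ : 2 ≤ P₁.length) (hl₂ : 2 ≤ P₂.length) (hl₃ : 2 ≤ P₃.length)
    (hX₁ : P₁.interior ⊆ X₁) (hX₂ : P₂.interior ⊆ X₂) (hX₃ : P₃.interior ⊆ X₃)
    (hd₁₂ : Disjoint X₁ X₂) (hd₁₃ : Disjoint X₁ X₃) (hd₂₃ : Disjoint X₂ X₃)
    (ha₁₂ : Anticomplete G X₁ X₂) (ha₁₃ : Anticomplete G X₁ X₃)
    (ha₂₃ : Anticomplete G X₂ X₃) : HasTheta G :=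
  ⟨a, b, P₁, P₂, P₃, hab, hnab, hl₁, hl₂, hl₃, hd₁₂.mono hX₁ hX₂, hd₁₃.mono hX₁ hX₃,
    hd₂₃.mono hX₂ hX₃, ha₁₂.mono hX₁ hX₂, ha₁₃.mono hX₁ hX₃, ha₂₃.mono hX₂ hX₃⟩

lemma hasTheta_of_three_common_nbrs {x y u₁ u₂ u₃ : V} (hxy : x ≠ y) (hnxy : ¬ G.Adj x y)
    (hx₁ : G.Adj x u₁) (hx₂ : G.Adj x u₂) (hx₃ : G.Adj x u₃)
    (hy₁ : G.Adj u₁ y) (hy₂ : G.Adj u₂ y) (hy₃ : G.Adj u₃ y)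
    (h₁₂ : u₁ ≠ u₂) (h₁₃ : u₁ ≠ u₃) (h₂₃ : u₂ ≠ u₃)
    (hn₁₂ : ¬ G.Adj u₁ u₂) (hn₁₃ : ¬ G.Adj u₁ u₃) (hn₂₃ : ¬ G.Adj u₂ u₃) : HasTheta G := by
  have path : ∀ u, G.Adj x u → G.Adj u y → ∃ R : IPath G x y, 2 ≤ R.length ∧ R.interior ⊆ {u} := by
    intro u hxu huy
    obtain ⟨R, hR, hRi⟩ := (IPath.single y).exists_cons_cons x u hxu
      (by simpa [IPath.support_single] using hxy) (by simpa [IPath.support_single] using huy.ne)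
      (by simpa [IPath.support_single] using hnxy) (by simpa [IPath.support_single] using huy)
    exact ⟨R, hR, hRi.trans (by simp [IPath.support_single])⟩
  obtain ⟨R₁, hl₁, hi₁⟩ := path u₁ hx₁ hy₁
  obtain ⟨R₂, hl₂, hi₂⟩ := path u₂ hx₂ hy₂
  obtain ⟨R₃, hl₃, hi₃⟩ := path u₃ hx₃ hy₃
  refine hasTheta_of_interior_subset R₁ R₂ R₃ hxy hnxy hl₁ hl₂ hl₃ hi₁ hi₂ hi₃ ?_ ?_ ?_ ?_ ?_ ?_ <;>
    simp [Anticomplete, *]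

lemma IndPath.exists_path_via_unique_nbr (P : IndPath G) {a m b : V} {pm : Fin P.n}
    (ham : G.Adj a m) (haP : a ∉ P.support) (hmP : m ∉ P.support)
    (hanti : ∀ v ∈ P.support, ¬ G.Adj a v) (hpm : ∀ j, G.Adj m (P.f j) ↔ j = pm)
    (Q : IPath G (P.f pm) b) (hQ : Q.support ⊆ P.support) :
    ∃ R : IPath G a b, 2 ≤ R.length ∧ R.interior ⊆ insert m (Q.support \ {b}) := by
  refine Q.exists_cons_cons a m ham (fun h => haP (hQ h)) (fun h => hmP (hQ h))
    (fun v hv => hanti v (hQ hv)) fun v hv => ?_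
  obtain ⟨j, rfl⟩ := hQ hv
  rw [hpm, P.f.injective.eq_iff]

lemma hasTheta_of_three_unique_nbrs (P : IndPath G) {a : V} {S : Set V}
    (hS : S ⊆ G.neighborSet a) (hstable : ∀ u ∈ S, ∀ w ∈ S, ¬ G.Adj u w)
    (hdisj : Disjoint P.support (insert a S)) (hanti : ∀ v ∈ P.support, ¬ G.Adj a v)
    {x y z : V} (hx : x ∈ S) (hy : y ∈ S) (hz : z ∈ S) {px py pz : Fin P.n}
    (hpx : ∀ j, G.Adj x (P.f j) ↔ j = px) (hpy : ∀ j, G.Adj y (P.f j) ↔ j = py)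
    (hpz : ∀ j, G.Adj z (P.f j) ↔ j = pz) (hxy : px < py) (hyz : py < pz) : HasTheta G := by
  have hout : ∀ v ∈ insert a S, v ∉ P.support := fun v hv hvP =>
    Set.disjoint_left.mp hdisj hvP hv
  have haP := hout a (Or.inl rfl)
  have hxP := hout x (Or.inr hx)
  have hyP := hout y (Or.inr hy)
  have hzP := hout z (Or.inr hz)
  -- the theta has ends `a` and `P.f py`, and passes through `y`, through `x`, and through `z`
  obtain ⟨R₁, hl₁, hi₁⟩ := P.exists_path_via_unique_nbr (hS hy) haP hyP hanti hpy
    (IPath.single _) (by simp [IPath.support_single, IndPath.support])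
  obtain ⟨R₂, hl₂, hi₂⟩ := P.exists_path_via_unique_nbr (hS hx) haP hxP hanti hpx
    (P.segment px py hxy.le) (by rw [IndPath.support_segment]; exact Set.image_subset_range _ _)
  obtain ⟨R₃, hl₃, hi₃⟩ := P.exists_path_via_unique_nbr (hS hz) haP hzP hanti hpz
    (P.segment py pz hyz.le).reverse
    (by rw [IPath.support_reverse, IndPath.support_segment]; exact Set.image_subset_range _ _)
  rw [IPath.support_single, Set.sdiff_self, insert_empty_eq] at hi₁
  rw [IndPath.support_segment_sdiff_right] at hi₂
  rw [IPath.support_reverse, IndPath.support_segment_sdiff_left] at hi₃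
  refine hasTheta_of_interior_subset R₁ R₂ R₃ (fun h => haP (h ▸ ⟨py, rfl⟩))
    (hanti _ ⟨py, rfl⟩) hl₁ hl₂ hl₃ hi₁ hi₂ hi₃ ?_ ?_ ?_ ?_ ?_ ?_
  · rw [Set.disjoint_singleton_left]
    rintro (h | ⟨j, -, h⟩)
    · exact hxy.ne' ((hpx py).mp (h ▸ (hpy py).mpr rfl))
    · exact hyP ⟨j, h⟩
  · rw [Set.disjoint_singleton_left]
    rintro (h | ⟨j, -, h⟩)
    · exact hyz.ne' ((hpy pz).mp (h ▸ (hpz pz).mpr rfl))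
    · exact hyP ⟨j, h⟩
  · rw [Set.disjoint_left]
    rintro _ (rfl | ⟨j, hj, rfl⟩) (h | ⟨k, hk, h⟩)
    · exact (hxy.trans hyz).ne ((hpz px).mp (h ▸ (hpx px).mpr rfl))
    · exact hxP ⟨k, h⟩
    · exact hzP ⟨j, h⟩
    · exact (hj.2.trans hk.1).ne (P.f.injective h).symm
  all_goals simp only [Anticomplete, Set.forall_mem_insert, Set.forall_mem_image,
    Set.mem_singleton_iff, forall_eq]
  · exact ⟨hstable y hy x hx, fun j hj h => hj.2.ne ((hpy j).mp h)⟩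
  · exact ⟨hstable y hy z hz, fun j hj h => hj.1.ne' ((hpy j).mp h)⟩
  · refine ⟨⟨hstable x hx z hz, fun k hk h => (hxy.trans hk.1).ne' ((hpx k).mp h)⟩,
      fun j hj => ⟨fun h => (hj.2.trans hyz).ne ((hpz j).mp h.symm), fun k hk => ?_⟩⟩
    rw [P.f.map_rel_iff, pathGraph_adj]
    have := hj.2
    have := hk.1
    omega

lemma SimpleGraph.IsClique.card_lt_of_cliqueFree {t : ℕ} {s : Finset V}
    (hs : G.IsClique (s : Set V)) (hG : G.CliqueFree t) : s.card < t := by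
  by_contra! h
  obtain ⟨C, hC, hCcard⟩ := Finset.exists_subset_card_eq h
  exact hG C ⟨hs.subset hC, hCcard⟩

def NoCommonNbrIn (G : SimpleGraph V) (S H : Set V) : Prop :=
  ∀ x ∈ S, ∀ y ∈ S, x ≠ y → ¬ ∃ u ∈ H, G.Adj x u ∧ G.Adj y u

lemma NoCommonNbrIn.mono {S S' H : Set V} (h : NoCommonNbrIn G S H) (hS : S' ⊆ S) :
    NoCommonNbrIn G S' H :=
  fun x hx y hy => h x (hS hx) y (hS hy)

lemma badFor_or_uglyFor {H : Set V} {x : V} (hH : H.Finite) (hx : ∃ u ∈ H, G.Adj x u)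
    (hgood : ¬ GoodFor G H x) : BadFor G H x ∨ UglyFor G H x := by
  by_cases hc : G.IsClique (NbrsIn G H x)
  · have hpos : 0 < (NbrsIn G H x).ncard :=
      (Set.ncard_pos (hH.subset Set.inter_subset_left)).mpr hx
    exact Or.inl ⟨hc, by unfold GoodFor at hgood; omega⟩
  · exact Or.inr hc

lemma IndPath.exists_adj_iff_of_goodFor (P : IndPath G) {x : V} (h : GoodFor G P.support x) :
    ∃ j, ∀ k, G.Adj x (P.f k) ↔ k = j := by
  obtain ⟨u, hu⟩ := Set.ncard_eq_one.mp h
  have hmem : ∀ k, G.Adj x (P.f k) ↔ P.f k = u := fun k => by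
    rw [← Set.mem_singleton_iff, ← hu]
    exact ⟨fun hk => ⟨⟨k, rfl⟩, hk⟩, fun hk => hk.2⟩
  obtain ⟨⟨j, rfl⟩, -⟩ : u ∈ NbrsIn G P.support x := hu ▸ rfl
  exact ⟨j, fun k => (hmem k).trans P.f.injective.eq_iff⟩

namespace Palanquin

variable {s l t : ℕ}

lemma card_lt_of_common_nbrs (hTheta : ¬ HasTheta G) (hfree : G.CliqueFree t)
    (P : Palanquin G s l) {x y : V} (hx : x ∈ P.S) (hy : y ∈ P.S) (hxy : x ≠ y)
    (T : Finset (Fin l)) (hT : ∀ i ∈ T, ∃ u ∈ (P.L i).support, G.Adj x u ∧ G.Adj y u) :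
    T.card < t := by
  classical
  have : Nonempty V := ⟨x⟩
  choose! u hu hxu hyu using hT
  have hinj : Set.InjOn u T := fun i hi j hj hij => by_contra fun hne =>
    Set.disjoint_left.mp (P.disj i j hne) (hu i hi) (hij ▸ hu j hj)
  have ha : ∀ k ∈ T, P.a ≠ u k := fun k hk h =>
    Set.disjoint_left.mp (P.avoid k) (h ▸ hu k hk) (Set.mem_insert _ _)
  rw [← Finset.card_image_of_injOn hinj]
  refine IsClique.card_lt_of_cliqueFree ?_ hfree
  intro v hv w hw hvw
  simp only [Finset.coe_image, Set.mem_image, Finset.mem_coe] at hv hw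
  obtain ⟨i, hi, rfl⟩ := hv
  obtain ⟨j, hj, rfl⟩ := hw
  by_contra hn
  exact hTheta (hasTheta_of_three_common_nbrs hxy (P.stable x hx y hy) (P.sub hx).symm
    (hxu i hi) (hxu j hj) (P.sub hy) (hyu i hi).symm (hyu j hj).symm (ha i hi) (ha j hj) hvw
    (P.anti i _ (hu i hi)) (P.anti j _ (hu j hj)) hn)

lemma exists_noCommonNbrIn [Finite V] (hTheta : ¬ HasTheta G) (hfree : G.CliqueFree t)
    (P : Palanquin G s l) (q : ℕ) (hl : s ^ 2 * t + q ≤ l) :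
    ∃ I : Finset (Fin l), I.card = q ∧ ∀ i ∈ I, NoCommonNbrIn G P.S (P.L i).support := by
  classical
  set S := P.S.toFinite.toFinset
  have hS : S.card = s := by rw [← P.card, Set.ncard_eq_toFinset_card]
  set Conf := Finset.univ.filter fun i => ¬ NoCommonNbrIn G P.S (P.L i).support
  have hConf : Conf ⊆ S.offDiag.biUnion fun xy => Finset.univ.filter fun i =>
      ∃ u ∈ (P.L i).support, G.Adj xy.1 u ∧ G.Adj xy.2 u := by
    intro i hi
    simp only [Conf, NoCommonNbrIn, Finset.mem_filter, Finset.mem_univ, true_and, not_forall,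
      not_not] at hi
    obtain ⟨x, hx, y, hy, hxy, hu⟩ := hi
    exact Finset.mem_biUnion.mpr ⟨(x, y), by simp [S, hx, hy, hxy], by simpa using hu⟩
  have hcard : Conf.card ≤ s ^ 2 * t := calc
    Conf.card ≤ ∑ xy ∈ S.offDiag, (Finset.univ.filter fun i =>
        ∃ u ∈ (P.L i).support, G.Adj xy.1 u ∧ G.Adj xy.2 u).card :=
      (Finset.card_le_card hConf).trans Finset.card_biUnion_le
    _ ≤ ∑ xy ∈ S.offDiag, t := Finset.sum_le_sum fun xy hxy => by
      obtain ⟨hx, hy, hxy⟩ := Finset.mem_offDiag.mp hxy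
      exact (card_lt_of_common_nbrs hTheta hfree P (by simpa [S] using hx) (by simpa [S] using hy)
        hxy _ fun i hi => (Finset.mem_filter.mp hi).2).le
    _ ≤ s ^ 2 * t := by
      rw [Finset.sum_const, smul_eq_mul, Finset.offDiag_card, hS, sq]
      exact Nat.mul_le_mul_right _ (Nat.sub_le _ _)
  obtain ⟨I, hI, hIcard⟩ := Finset.exists_subset_card_eq (s := Confᶜ) (n := q)
    (by rw [Finset.card_compl, Fintype.card_fin]; omega)
  refine ⟨I, hIcard, fun i hi => ?_⟩
  simpa [Conf] using Finset.mem_compl.mp (hI hi)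

lemma card_le_two_of_goodFor (hTheta : ¬ HasTheta G) (P : Palanquin G s l) (i : Fin l)
    (hclean : NoCommonNbrIn G P.S (P.L i).support) {T : Finset V}
    (hT : ∀ x ∈ T, x ∈ P.S ∧ GoodFor G (P.L i).support x) : T.card ≤ 2 := by
  classical
  have hpos : ∀ x ∈ T, ∃ j, ∀ k, G.Adj x ((P.L i).f k) ↔ k = j := fun x hx =>
    (P.L i).exists_adj_iff_of_goodFor (hT x hx).2
  have : Nonempty (Fin (P.L i).n) := ⟨⟨0, (P.L i).pos⟩⟩
  choose! pos hpos using hpos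
  have hinj : Set.InjOn pos T := fun x hx y hy hxy => by_contra fun hne =>
    hclean x (hT x hx).1 y (hT y hy).1 hne
      ⟨_, ⟨pos x, rfl⟩, (hpos x hx _).mpr rfl, (hpos y hy _).mpr hxy⟩
  by_contra! h
  rw [← Finset.card_image_of_injOn hinj] at h
  obtain ⟨_, hj₁, _, hj₂, _, hj₃, h₁₂, h₂₃⟩ := Finset.exists_lt_lt_of_two_lt_card h
  obtain ⟨x, hx, rfl⟩ := Finset.mem_image.mp hj₁
  obtain ⟨y, hy, rfl⟩ := Finset.mem_image.mp hj₂
  obtain ⟨z, hz, rfl⟩ := Finset.mem_image.mp hj₃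
  exact hTheta (hasTheta_of_three_unique_nbrs (P.L i) P.sub P.stable (P.avoid i) (P.anti i)
    (hT x hx).1 (hT y hy).1 (hT z hz).1 (hpos x hx) (hpos y hy) (hpos z hz) h₁₂ h₂₃)

lemma exists_subset_not_goodFor [Finite V] (hTheta : ¬ HasTheta G) (P : Palanquin G s l)
    (I : Finset (Fin l)) (hI : ∀ i ∈ I, NoCommonNbrIn G P.S (P.L i).support) :
    ∃ S₀ : Finset V, ↑S₀ ⊆ P.S ∧ s ≤ S₀.card + 2 * I.card ∧
      ∀ x ∈ S₀, ∀ i ∈ I, ¬ GoodFor G (P.L i).support x := by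
  classical
  set S := P.S.toFinite.toFinset
  have hS : S.card = s := by rw [← P.card, Set.ncard_eq_toFinset_card]
  set good : Fin l → Finset V := fun i => S.filter (GoodFor G (P.L i).support)
  have hgood : (S.filter fun x => ¬ ∀ i ∈ I, ¬ GoodFor G (P.L i).support x).card ≤ 2 * I.card :=
    calc _ ≤ (I.biUnion good).card := Finset.card_le_card fun x hx => by
          simp only [Finset.mem_filter, not_forall, not_not] at hx
          obtain ⟨hx, i, hi, hgood⟩ := hx
          exact Finset.mem_biUnion.mpr ⟨i, hi, Finset.mem_filter.mpr ⟨hx, hgood⟩⟩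
      _ ≤ ∑ i ∈ I, (good i).card := Finset.card_biUnion_le
      _ ≤ ∑ i ∈ I, 2 := Finset.sum_le_sum fun i hi =>
          card_le_two_of_goodFor hTheta P i (hI i hi) fun x hx => by
            simpa [good, S] using Finset.mem_filter.mp hx
      _ = 2 * I.card := by rw [Finset.sum_const, smul_eq_mul, mul_comm]
  have hsplit := Finset.card_filter_add_card_filter_not (s := S)
    (fun x => ∀ i ∈ I, ¬ GoodFor G (P.L i).support x)
  refine ⟨S.filter fun x => ∀ i ∈ I, ¬ GoodFor G (P.L i).support x, fun x hx => ?_, by omega,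
    fun x hx => (Finset.mem_filter.mp hx).2⟩
  simpa [S] using (Finset.mem_filter.mp hx).1

end Palanquin

end

theorem statement_12_general (p q t : ℕ)
    {V : Type} [Fintype V] (G : SimpleGraph V)
    (hTheta : ¬ HasTheta G) (hfree : G.CliqueFree t)
    (P : Palanquin G (2 ^ q * p + 2 * q) ((2 ^ q * p + 2 * q) ^ 2 * t ^ 3 + q)) :
    ∃ S₁ ⊆ P.S, S₁.ncard = p ∧
      ∃ I : Finset (Fin ((2 ^ q * p + 2 * q) ^ 2 * t ^ 3 + q)), I.card = q ∧
        ∀ i ∈ I,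
          (∀ x ∈ S₁, ∀ y ∈ S₁, x ≠ y →
            ¬ ∃ u ∈ (P.L i).support, G.Adj x u ∧ G.Adj y u) ∧
          ((∀ x ∈ S₁, BadFor G (P.L i).support x) ∨
            (∀ x ∈ S₁, UglyFor G (P.L i).support x)) := by
  obtain ⟨I, hIcard, hclean⟩ := P.exists_noCommonNbrIn hTheta hfree q
    (by gcongr; exact Nat.le_self_pow (by norm_num) t)
  obtain ⟨S₀, hS₀, hS₀card, hgood⟩ := P.exists_subset_not_goodFor hTheta I hclean
  obtain ⟨S₁, hS₁, hS₁card, hhom⟩ := Finset.exists_subset_card_eq_forall_or_forall_not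
    (fun i x => BadFor G (P.L i).support x) p I S₀ (by rw [hIcard]; omega)
  refine ⟨S₁, (Finset.coe_subset.mpr hS₁).trans hS₀, by rw [Set.ncard_coe_finset, hS₁card],
    I, hIcard, fun i hi => ⟨(hclean i hi).mono ((Finset.coe_subset.mpr hS₁).trans hS₀), ?_⟩⟩
  refine (hhom i hi).imp id fun hnot x hx => ?_
  exact ((badFor_or_uglyFor (Set.finite_range _) (P.nbr x (hS₀ (hS₁ hx)) i)
    (hgood x (hS₁ hx) i hi)).resolve_left (hnot x hx))

/-- in a (theta, K_t)-free graph, every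
`(2^q·p + 2q, (2^q·p + 2q)²·t³ + q)`-palanquin `(a, S, ℒ)` admits `S₁ ⊆ S` of size `p` and
`ℒ₁ ⊆ ℒ` of size `q` such that for every `L ∈ ℒ₁`, no two vertices of `S₁` have a common
neighbor in `L`, and either all vertices of `S₁` are `L`-bad or all are `L`-ugly. -/
theorem statement_12 (p q t : ℕ) (hp : 1 ≤ p) (hq : 1 ≤ q) (ht : 1 ≤ t)
    {V : Type} [Fintype V] (G : SimpleGraph V)
    (hTheta : ¬ HasTheta G) (hfree : G.CliqueFree t)
    (P : Palanquin G (2 ^ q * p + 2 * q) ((2 ^ q * p + 2 * q) ^ 2 * t ^ 3 + q)) :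
    ∃ S₁ ⊆ P.S, S₁.ncard = p ∧
      ∃ I : Finset (Fin ((2 ^ q * p + 2 * q) ^ 2 * t ^ 3 + q)), I.card = q ∧
        ∀ i ∈ I,
          (∀ x ∈ S₁, ∀ y ∈ S₁, x ≠ y →
            ¬ ∃ u ∈ (P.L i).support, G.Adj x u ∧ G.Adj y u) ∧
          ((∀ x ∈ S₁, BadFor G (P.L i).support x) ∨
            (∀ x ∈ S₁, UglyFor G (P.L i).support x)) :=
  statement_12_general p q t G hTheta hfree P
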